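/- arXiv:1811.05109 — 2 statements merged into one kernel-verified Lean document; each statement's English description precedes it below -/
import Mathlib

section
/- Let m, n be integers with n ≥ 1 and gcd(m, n) = 1. Define an action of the group AddCircle(1) on AddCircle(1) × ℂ by ψ · (θ, z) = (θ + n•ψ, toCircle((m+n)•ψ) · z), where toCircle : AddCircle(1) → Circle is the canonical character ψ ↦ e^{2πiψ} and Circle acts on ℂ by multiplication. Then: (1) this is a well-defined continuous action of AddCircle(1); (2) for every point (θ, z) with z ≠ 0, the stabilizer is trivial (the action is free off the core {z = 0}); (3) for every point (θ, 0), the stabilizer equals {ψ ∈ AddCircle(1) : n•ψ = 0}, a cyclic subgroup of order n. -/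
/-!
Both coordinates of `twistAct m n ψ` are given by continuous homomorphisms of `ψ`, which makes
it a continuous action. A point `(θ, z)` is fixed by `ψ` exactly when `n • ψ = 0` and, unless
`z = 0`, also `(m + n) • ψ = 0`; since `m + n` and `n` are coprime, Bézout then forces `ψ = 0`.
The `n`-torsion of `ℝ/ℤ` is the cyclic group generated by `1/n`, which has order `n`.
-/

open AddCircle

/-- The circle action on the solid-torus piece after the Gluck twist:
`ψ · (θ, z) = (θ + n•ψ, e^{2πi(m+n)ψ} · z)`. -/
noncomputable def twistAct (m n : ℤ) (ψ : AddCircle (1 : ℝ))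
    (p : AddCircle (1 : ℝ) × ℂ) : AddCircle (1 : ℝ) × ℂ :=
  (p.1 + n • ψ, (AddCircle.toCircle ((m + n) • ψ) : ℂ) * p.2)

theorem eq_zero_of_zsmul_eq_zero_of_isCoprime {G : Type*} [AddGroup G] {a b : ℤ}
    (hab : IsCoprime a b) {x : G} (ha : a • x = 0) (hb : b • x = 0) : x = 0 := by
  obtain ⟨u, v, huv⟩ := hab
  calc x = (u * a + v * b) • x := by rw [huv, one_zsmul]
    _ = u • a • x + v • b • x := by rw [add_zsmul, mul_zsmul, mul_zsmul]
    _ = 0 := by rw [ha, hb, smul_zero, smul_zero, add_zero]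

namespace AddCircle

variable {p : ℝ} [Fact (0 < p)]

theorem nsmul_eq_zero_iff_mem_zmultiples {n : ℕ} (hn : 0 < n) {u : AddCircle p} :
    n • u = 0 ↔ u ∈ AddSubgroup.zmultiples ((p / n : ℝ) : AddCircle p) := by
  rw [AddSubgroup.mem_zmultiples_iff]
  constructor
  · rw [AddCircle.nsmul_eq_zero_iff hn]
    rintro ⟨k, -, rfl⟩
    refine ⟨k, ?_⟩
    rw [natCast_zsmul, ← coe_nsmul, nsmul_eq_mul, div_mul_eq_mul_div, mul_div_assoc, mul_comm]
  · rintro ⟨k, rfl⟩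
    rw [smul_comm, ← coe_nsmul, nsmul_eq_mul, mul_div_cancel₀ _ (by positivity), coe_period,
      smul_zero]

theorem natCard_nsmul_eq_zero {n : ℕ} (hn : 0 < n) :
    Nat.card {u : AddCircle p // n • u = 0} = n := by
  simp_rw [nsmul_eq_zero_iff_mem_zmultiples hn]
  exact (Nat.card_zmultiples _).trans (addOrderOf_period_div hn)

end AddCircle

section

variable (m n : ℤ)

theorem twistAct_zero (p : AddCircle (1 : ℝ) × ℂ) : twistAct m n 0 p = p := by
  simp [twistAct]

theorem twistAct_add (ψ ψ' : AddCircle (1 : ℝ)) (p : AddCircle (1 : ℝ) × ℂ) :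
    twistAct m n (ψ + ψ') p = twistAct m n ψ (twistAct m n ψ' p) := by
  simp only [twistAct, smul_add, toCircle_add, Circle.coe_mul, Prod.mk.injEq]
  exact ⟨by abel, by ring⟩

theorem continuous_twistAct :
    Continuous fun q : AddCircle (1 : ℝ) × (AddCircle (1 : ℝ) × ℂ) => twistAct m n q.1 q.2 := by
  unfold twistAct
  fun_prop

theorem twistAct_eq_self_iff {ψ θ : AddCircle (1 : ℝ)} {z : ℂ} :
    twistAct m n ψ (θ, z) = (θ, z) ↔ n • ψ = 0 ∧ ((m + n) • ψ = 0 ∨ z = 0) := by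
  rw [twistAct, Prod.mk.injEq, add_eq_left, mul_left_eq_self₀, Circle.coe_eq_one,
    ← toCircle_zero, (injective_toCircle one_ne_zero).eq_iff]

end

/-- for coprime `(m, n)` with `n ≥ 1`, the map `twistAct` is a
well-defined continuous action of `ℝ/ℤ`; it is free off the core `{z = 0}`,
and the stabilizer of a core point is the `n`-torsion subgroup
`{ψ : n•ψ = 0}`, which is cyclic of order `n`. -/
theorem twistAct_orbit_structure (m n : ℤ) (hn : 1 ≤ n) (h : Int.gcd m n = 1) :
    (∀ p : AddCircle (1 : ℝ) × ℂ, twistAct m n 0 p = p) ∧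
    (∀ (ψ ψ' : AddCircle (1 : ℝ)) (p : AddCircle (1 : ℝ) × ℂ),
      twistAct m n (ψ + ψ') p = twistAct m n ψ (twistAct m n ψ' p)) ∧
    Continuous (fun q : AddCircle (1 : ℝ) × (AddCircle (1 : ℝ) × ℂ) =>
      twistAct m n q.1 q.2) ∧
    (∀ (θ : AddCircle (1 : ℝ)) (z : ℂ), z ≠ 0 →
      ∀ ψ : AddCircle (1 : ℝ), twistAct m n ψ (θ, z) = (θ, z) → ψ = 0) ∧
    (∀ (θ : AddCircle (1 : ℝ)) (ψ : AddCircle (1 : ℝ)),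
      twistAct m n ψ (θ, 0) = (θ, 0) ↔ n • ψ = 0) ∧
    Nat.card {ψ : AddCircle (1 : ℝ) // n • ψ = 0} = n.toNat := by
  refine ⟨twistAct_zero m n, twistAct_add m n, continuous_twistAct m n, ?_, ?_, ?_⟩
  · intro θ z hz ψ hψ
    obtain ⟨hnψ, hmnψ | rfl⟩ := (twistAct_eq_self_iff m n).mp hψ
    · have hcop : IsCoprime (m + n) n := by
        simpa using (Int.isCoprime_iff_gcd_eq_one.mpr h).add_mul_left_left 1
      exact eq_zero_of_zsmul_eq_zero_of_isCoprime hcop hmnψ hnψ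
    · exact absurd rfl hz
  · intro θ ψ
    simp [twistAct_eq_self_iff]
  · lift n to ℕ using by omega
    simpa using natCard_nsmul_eq_zero (p := 1) (by omega : 0 < n)
end

section
/- Let S² denote the unit sphere in ℝ³ and Real.Angle = ℝ/2πℤ the circle, and let σ, σ⁻¹ : S² × Real.Angle → S² × Real.Angle be the homeomorphisms σ((x₁, x₂, x₃), φ) = ((x₁·cos φ + x₂·sin φ, −x₁·sin φ + x₂·cos φ, x₃), φ) and σ⁻¹((x₁, x₂, x₃), φ) = ((x₁·cos φ − x₂·sin φ, x₁·sin φ + x₂·cos φ, x₃), φ). Then σ is isotopic to σ⁻¹: there exists a continuous map H : Set.Icc (0:ℝ) 1 × (S² × Real.Angle) → S² × Real.Angle such that H(0, ·) = σ, H(1, ·) = σ⁻¹, and for every t ∈ [0,1] the map H(t, ·) is a homeomorphism of S² × Real.Angle. -/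
/-!
Conjugating `σ` by the rotation `ρ_θ` about the `x₁`-axis gives an isotopy `t ↦ ρ_{πt} σ ρ_{-πt}`
from `σ` to `ρ_π σ ρ_π⁻¹`. The half-turn `ρ_π = diag(1, -1, -1)` reverses the orientation of the
`x₃`-axis, about which `σ` rotates, so it conjugates `σ` into `σ⁻¹`.
-/

open Real

def Homeomorph.Isotopic {X : Type*} [TopologicalSpace X] (f g : X ≃ₜ X) : Prop :=
  ∃ H : unitInterval × X → X, Continuous H ∧ (∀ p, H (0, p) = f p) ∧ (∀ p, H (1, p) = g p) ∧
    ∀ t, ∃ e : X ≃ₜ X, ∀ p, e p = H (t, p)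

namespace Flow

variable {τ α β : Type*} [TopologicalSpace τ] [TopologicalSpace α] [TopologicalSpace β]

def prod [AddZero τ] (ϕ : Flow τ α) (ψ : Flow τ β) : Flow τ (α × β) where
  toFun t p := (ϕ t p.1, ψ t p.2)
  cont' := (ϕ.continuous continuous_fst (continuous_fst.comp continuous_snd)).prodMk
    (ψ.continuous continuous_fst (continuous_snd.comp continuous_snd))
  map_add' _ _ _ := by simp only [map_add]
  map_zero' _ := by simp only [map_zero_apply]

@[simp]
theorem prod_apply [AddZero τ] (ϕ : Flow τ α) (ψ : Flow τ β) (t : τ) (p : α × β) :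
    ϕ.prod ψ t p = (ϕ t p.1, ψ t p.2) := rfl

theorem isotopic_conj (ϕ : Flow ℝ α) (σ : α ≃ₜ α) (T : ℝ) :
    σ.Isotopic ((ϕ.toHomeomorph (-T)).trans (σ.trans (ϕ.toHomeomorph T))) := by
  have hs : Continuous fun q : unitInterval × α => T * q.1 := by fun_prop
  refine ⟨fun q => ϕ (T * q.1) (σ (ϕ (-(T * q.1)) q.2)),
    ϕ.continuous hs (σ.continuous.comp (ϕ.continuous hs.neg continuous_snd)), ?_, ?_, ?_⟩
  · intro p
    simp only [Set.Icc.coe_zero, mul_zero, neg_zero, map_zero_apply]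
  · intro p
    simp only [Set.Icc.coe_one, mul_one]
    rfl
  · exact fun t => ⟨(ϕ.toHomeomorph (-(T * t))).trans (σ.trans (ϕ.toHomeomorph (T * t))),
      fun _ => rfl⟩

end Flow

noncomputable def xAxisRotation : Flow ℝ (EuclideanSpace ℝ (Fin 3)) where
  toFun θ x := !₂[x 0, cos θ * x 1 - sin θ * x 2, sin θ * x 1 + cos θ * x 2]
  cont' := by
    refine (PiLp.continuous_toLp 2 _).comp (continuous_pi fun i => ?_)
    fin_cases i <;> simp <;> fun_prop
  map_add' s t x := by
    ext i
    fin_cases i <;> simp [cos_add, sin_add] <;> ring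
  map_zero' x := by
    ext i
    fin_cases i <;> simp

@[simp] theorem xAxisRotation_apply_zero (θ : ℝ) (x : EuclideanSpace ℝ (Fin 3)) :
    xAxisRotation θ x 0 = x 0 := rfl

@[simp] theorem xAxisRotation_apply_one (θ : ℝ) (x : EuclideanSpace ℝ (Fin 3)) :
    xAxisRotation θ x 1 = cos θ * x 1 - sin θ * x 2 := rfl

@[simp] theorem xAxisRotation_apply_two (θ : ℝ) (x : EuclideanSpace ℝ (Fin 3)) :
    xAxisRotation θ x 2 = sin θ * x 1 + cos θ * x 2 := rfl

theorem norm_xAxisRotation (θ : ℝ) (x : EuclideanSpace ℝ (Fin 3)) :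
    ‖xAxisRotation θ x‖ = ‖x‖ := by
  simp only [EuclideanSpace.norm_eq, Fin.sum_univ_three, Real.norm_eq_abs, sq_abs,
    xAxisRotation_apply_zero, xAxisRotation_apply_one, xAxisRotation_apply_two]
  congr 1
  linear_combination (x 1 ^ 2 + x 2 ^ 2) * sin_sq_add_cos_sq θ

theorem isInvariant_sphere_xAxisRotation (r : ℝ) :
    IsInvariant xAxisRotation (Metric.sphere 0 r) := fun θ x hx => by
  simpa [norm_xAxisRotation] using hx

/-- The Gluck-twist map `σ` of `S² × S¹` is isotopic to its
inverse `σ⁻¹`: there is a continuous `H : [0,1] × (S² × S¹) → S² × S¹` with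
`H(0,·) = σ`, `H(1,·) = σ⁻¹`, and `H(t,·)` a homeomorphism for every `t`. -/
theorem gluck_isotopic_to_inverse
    (σ σinv : (Metric.sphere (0 : EuclideanSpace ℝ (Fin 3)) 1 × Real.Angle) ≃ₜ
              (Metric.sphere (0 : EuclideanSpace ℝ (Fin 3)) 1 × Real.Angle))
    (hσ : ∀ (x : Metric.sphere (0 : EuclideanSpace ℝ (Fin 3)) 1) (φ : Real.Angle),
      ((σ (x, φ)).1 : EuclideanSpace ℝ (Fin 3)) 0 =
          (x : EuclideanSpace ℝ (Fin 3)) 0 * φ.cos +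
            (x : EuclideanSpace ℝ (Fin 3)) 1 * φ.sin ∧
      ((σ (x, φ)).1 : EuclideanSpace ℝ (Fin 3)) 1 =
          -((x : EuclideanSpace ℝ (Fin 3)) 0) * φ.sin +
            (x : EuclideanSpace ℝ (Fin 3)) 1 * φ.cos ∧
      ((σ (x, φ)).1 : EuclideanSpace ℝ (Fin 3)) 2 =
          (x : EuclideanSpace ℝ (Fin 3)) 2 ∧
      (σ (x, φ)).2 = φ)
    (hσinv : ∀ (x : Metric.sphere (0 : EuclideanSpace ℝ (Fin 3)) 1) (φ : Real.Angle),
      ((σinv (x, φ)).1 : EuclideanSpace ℝ (Fin 3)) 0 =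
          (x : EuclideanSpace ℝ (Fin 3)) 0 * φ.cos -
            (x : EuclideanSpace ℝ (Fin 3)) 1 * φ.sin ∧
      ((σinv (x, φ)).1 : EuclideanSpace ℝ (Fin 3)) 1 =
          (x : EuclideanSpace ℝ (Fin 3)) 0 * φ.sin +
            (x : EuclideanSpace ℝ (Fin 3)) 1 * φ.cos ∧
      ((σinv (x, φ)).1 : EuclideanSpace ℝ (Fin 3)) 2 =
          (x : EuclideanSpace ℝ (Fin 3)) 2 ∧
      (σinv (x, φ)).2 = φ) :
    ∃ H : Set.Icc (0 : ℝ) 1 × (Metric.sphere (0 : EuclideanSpace ℝ (Fin 3)) 1 × Real.Angle) →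
          Metric.sphere (0 : EuclideanSpace ℝ (Fin 3)) 1 × Real.Angle,
      Continuous H ∧
      (∀ p, H (⟨0, by norm_num⟩, p) = σ p) ∧
      (∀ p, H (⟨1, by norm_num⟩, p) = σinv p) ∧
      (∀ t : Set.Icc (0 : ℝ) 1,
        ∃ e : (Metric.sphere (0 : EuclideanSpace ℝ (Fin 3)) 1 × Real.Angle) ≃ₜ
              (Metric.sphere (0 : EuclideanSpace ℝ (Fin 3)) 1 × Real.Angle),
          ∀ p, e p = H (t, p)) := by
  set ρ := xAxisRotation.restrict (isInvariant_sphere_xAxisRotation 1)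
  set ϕ := ρ.prod (Flow.id ℝ Real.Angle)
  suffices hconj : σinv = (ϕ.toHomeomorph (-π)).trans (σ.trans (ϕ.toHomeomorph π)) from
    hconj ▸ ϕ.isotopic_conj σ π
  ext ⟨x, φ⟩ : 2
  all_goals simp only [ϕ, Homeomorph.trans_apply, Flow.toHomeomorph_apply, Flow.prod_apply,
    Flow.id_apply, id]
  · ext i : 2
    obtain ⟨hσ₀, hσ₁, hσ₂, -⟩ := hσ (ρ (-π) x) φ
    obtain ⟨hinv₀, hinv₁, hinv₂, -⟩ := hσinv x φ
    set y := ρ (-π) x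
    have hy : (y : EuclideanSpace ℝ (Fin 3)) = xAxisRotation (-π) x := rfl
    clear_value y
    fin_cases i <;> simp [ρ, hσ₀, hσ₁, hσ₂, hinv₀, hinv₁, hinv₂, hy] <;> ring
  · rw [(hσ _ φ).2.2.2, (hσinv x φ).2.2.2]
end
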